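/- arXiv:2301.00301 — 2 statements merged into one kernel-verified Lean document; each statement's English description precedes it below -/
import Mathlib

section
/- Data-dependent Rényi DP of the Gaussian mechanism with agreement: releasing argmax_j {n_j + N(0, σ²)} over C vote counts, if the gap between the top count and all others is sufficiently large relative to σ, then the probability q that the released index differs from the true argmax can be made arbitrarily small; in particular for the (data-independent) Gaussian mechanism on a counting query with sensitivity-1 vote counts, the release satisfies (α, α/σ²)-RDP for every α > 1. -/
open MeasureTheory Real

/-- The density of the Gaussian mechanism that adds independent `N(0, σ²)` noise to
each of the `C` vote counts `μ`. -/
noncomputable def gaussMechDensity {C : ℕ} (σ : ℝ) (μ : EuclideanSpace ℝ (Fin C))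
    (ω : EuclideanSpace ℝ (Fin C)) : ℝ :=
  ∏ j : Fin C, (1 / (σ * Real.sqrt (2 * Real.pi))) *
    Real.exp (-(ω j - μ j) ^ 2 / (2 * σ ^ 2))

/-- One-dimensional Rényi integral for two Gaussians with the same variance. -/
lemma gauss_renyi_1d (σ : ℝ) (hσ : 0 < σ) (α a b : ℝ) :
    (∫ x : ℝ, ((1 / (σ * Real.sqrt (2 * Real.pi))) * Real.exp (-(x - a) ^ 2 / (2 * σ ^ 2))) ^ α *
      ((1 / (σ * Real.sqrt (2 * Real.pi))) * Real.exp (-(x - b) ^ 2 / (2 * σ ^ 2))) ^ (1 - α))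
    = Real.exp (α * (α - 1) * (a - b) ^ 2 / (2 * σ ^ 2)) := by
  have hσ2 : (σ : ℝ) ^ 2 ≠ 0 := pow_ne_zero _ hσ.ne'
  have hc : (0:ℝ) < 1 / (σ * Real.sqrt (2 * Real.pi)) := by positivity
  set v : NNReal := ⟨σ ^ 2, sq_nonneg σ⟩ with hv
  have hv0 : v ≠ 0 := by
    intro h
    apply hσ2
    have := congrArg (fun t : NNReal => (t : ℝ)) h
    exact this
  have hcoe : ((v : ℝ)) = σ ^ 2 := rfl
  have hsqrt : (Real.sqrt (2 * Real.pi * v))⁻¹ = 1 / (σ * Real.sqrt (2 * Real.pi)) := by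
    rw [hcoe, show 2 * Real.pi * σ ^ 2 = σ ^ 2 * (2 * Real.pi) by ring,
      Real.sqrt_mul (sq_nonneg σ), Real.sqrt_sq hσ.le, one_div, mul_inv]
  have key : ∀ x : ℝ,
      ((1 / (σ * Real.sqrt (2 * Real.pi))) * Real.exp (-(x - a) ^ 2 / (2 * σ ^ 2))) ^ α *
      ((1 / (σ * Real.sqrt (2 * Real.pi))) * Real.exp (-(x - b) ^ 2 / (2 * σ ^ 2))) ^ (1 - α)
      = Real.exp (α * (α - 1) * (a - b) ^ 2 / (2 * σ ^ 2)) *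
        ProbabilityTheory.gaussianPDFReal (α * a + (1 - α) * b) v x := by
    intro x
    rw [Real.mul_rpow hc.le (Real.exp_nonneg _), Real.mul_rpow hc.le (Real.exp_nonneg _),
      ← Real.exp_mul, ← Real.exp_mul, ProbabilityTheory.gaussianPDFReal, hsqrt, hcoe,
      mul_mul_mul_comm, ← Real.rpow_add hc, ← Real.exp_add,
      show α + (1 - α) = 1 by ring, Real.rpow_one,
      show Real.exp (α * (α - 1) * (a - b) ^ 2 / (2 * σ ^ 2)) *
        (1 / (σ * Real.sqrt (2 * Real.pi)) *
          Real.exp (-(x - (α * a + (1 - α) * b)) ^ 2 / (2 * σ ^ 2)))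
        = 1 / (σ * Real.sqrt (2 * Real.pi)) *
          (Real.exp (α * (α - 1) * (a - b) ^ 2 / (2 * σ ^ 2)) *
            Real.exp (-(x - (α * a + (1 - α) * b)) ^ 2 / (2 * σ ^ 2))) from by ring,
      ← Real.exp_add]
    congr 1
    field_simp
    ring
  simp_rw [key]
  rw [MeasureTheory.integral_const_mul, ProbabilityTheory.integral_gaussianPDFReal_eq_one _ hv0, mul_one]

/-- vote-count vectors have ℓ₂-sensitivity at most `√2` across
neighboring datasets; the Gaussian mechanism adding `N(0, σ²)` noise to the counts
(whose `argmax` post-processing is the released label) satisfies `(α, α/σ²)`-Rényi DP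
for every `α > 1`, i.e. the order-`α` Rényi divergence between the noisy-count
distributions on any pair of neighbors is at most `α/σ²`. -/
theorem gaussian_vote_mechanism_rdp
    {𝒳 : Type*} {C : ℕ} (Neighbor : 𝒳 → 𝒳 → Prop)
    (counts : 𝒳 → EuclideanSpace ℝ (Fin C))
    (σ : ℝ) (hσ : 0 < σ)
    (hsens : ∀ X X', Neighbor X X' → ‖counts X - counts X'‖ ≤ Real.sqrt 2)
    (α : ℝ) (hα : 1 < α) :
    ∀ X X', Neighbor X X' →
      (1 / (α - 1)) * Real.log (∫ ω,
        (gaussMechDensity σ (counts X) ω) ^ α *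
          (gaussMechDensity σ (counts X') ω) ^ (1 - α)) ≤ α / σ ^ 2 := by
  intro X X' hN
  set μ := counts X
  set ν := counts X'
  have hfac : ∀ (m : EuclideanSpace ℝ (Fin C)) (j : Fin C) (x : ℝ),
      (0:ℝ) ≤ (1 / (σ * Real.sqrt (2 * Real.pi))) * Real.exp (-(x - m j) ^ 2 / (2 * σ ^ 2)) := by
    intro m j x; positivity
  -- rewrite the integrand as a product of one-dimensional integrands
  have hintegrand : ∀ ω : EuclideanSpace ℝ (Fin C),
      (gaussMechDensity σ μ ω) ^ α * (gaussMechDensity σ ν ω) ^ (1 - α)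
      = ∏ j : Fin C,
          (((1 / (σ * Real.sqrt (2 * Real.pi))) * Real.exp (-(ω j - μ j) ^ 2 / (2 * σ ^ 2))) ^ α *
            ((1 / (σ * Real.sqrt (2 * Real.pi))) *
              Real.exp (-(ω j - ν j) ^ 2 / (2 * σ ^ 2))) ^ (1 - α)) := by
    intro ω
    rw [gaussMechDensity, gaussMechDensity,
      ← Real.finset_prod_rpow _ _ (fun j _ => hfac μ j (ω j)),
      ← Real.finset_prod_rpow _ _ (fun j _ => hfac ν j (ω j)),
      ← Finset.prod_mul_distrib]
  simp_rw [hintegrand]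
  -- transfer the integral to the product space and use Fubini
  have hmp := (EuclideanSpace.volume_preserving_symm_measurableEquiv_toLp (Fin C)).symm
  rw [← hmp.integral_comp (MeasurableEquiv.measurableEmbedding _)]
  have hcomp :
      (fun x : Fin C → ℝ => ∏ j : Fin C,
          (((1 / (σ * Real.sqrt (2 * Real.pi))) *
              Real.exp (-(((MeasurableEquiv.toLp 2 (Fin C → ℝ)).symm.symm x) j - μ j) ^ 2 /
                (2 * σ ^ 2))) ^ α *
            ((1 / (σ * Real.sqrt (2 * Real.pi))) *
              Real.exp (-(((MeasurableEquiv.toLp 2 (Fin C → ℝ)).symm.symm x) j - ν j) ^ 2 /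
                (2 * σ ^ 2))) ^ (1 - α)))
      = fun x : Fin C → ℝ => ∏ j : Fin C,
          (fun y : ℝ =>
            (((1 / (σ * Real.sqrt (2 * Real.pi))) * Real.exp (-(y - μ j) ^ 2 / (2 * σ ^ 2))) ^ α *
              ((1 / (σ * Real.sqrt (2 * Real.pi))) *
                Real.exp (-(y - ν j) ^ 2 / (2 * σ ^ 2))) ^ (1 - α))) (x j) := rfl
  rw [hcomp, MeasureTheory.integral_fintype_prod_volume_eq_prod
    (fun j (y : ℝ) =>
      ((1 / (σ * Real.sqrt (2 * Real.pi))) * Real.exp (-(y - μ j) ^ 2 / (2 * σ ^ 2))) ^ α *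
        ((1 / (σ * Real.sqrt (2 * Real.pi))) *
          Real.exp (-(y - ν j) ^ 2 / (2 * σ ^ 2))) ^ (1 - α))]
  simp_rw [gauss_renyi_1d σ hσ α]
  rw [← Real.exp_sum]
  rw [Real.log_exp]
  -- now bound the sum of squared coordinate differences
  have hS : ∑ j : Fin C, (μ j - ν j) ^ 2 ≤ 2 := by
    have h1 : ‖μ - ν‖ ^ 2 ≤ Real.sqrt 2 ^ 2 := by
      have := hsens X X' hN
      exact pow_le_pow_left₀ (norm_nonneg _) this 2
    rw [Real.sq_sqrt (by norm_num : (0:ℝ) ≤ 2)] at h1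
    have h2 : ‖μ - ν‖ ^ 2 = ∑ j : Fin C, (μ j - ν j) ^ 2 := by
      rw [EuclideanSpace.norm_eq, Real.sq_sqrt (Finset.sum_nonneg fun j _ => by positivity)]
      congr 1
      ext j
      simp [Real.norm_eq_abs, sq_abs]
    linarith [h2 ▸ h1]
  have hα1 : (0:ℝ) < α - 1 := by linarith
  have hαpos : (0:ℝ) < α := by linarith
  have heq : (1 / (α - 1)) * ∑ j : Fin C, α * (α - 1) * (μ j - ν j) ^ 2 / (2 * σ ^ 2)
      = α * (∑ j : Fin C, (μ j - ν j) ^ 2) / (2 * σ ^ 2) := by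
    rw [← Finset.sum_div, ← Finset.mul_sum]
    field_simp
  rw [heq]
  have hden : (0:ℝ) < 2 * σ ^ 2 := by positivity
  calc α * (∑ j : Fin C, (μ j - ν j) ^ 2) / (2 * σ ^ 2)
      ≤ α * 2 / (2 * σ ^ 2) := by gcongr
    _ = α / σ ^ 2 := by field_simp
end

section
/- Private upper bound validity (GNSS): Let SS(X) > 0 and suppose μ is a random variable such that Pr[e^μ ≥ SS(X)] ≥ 1 − δ₂/2. Define U := ε(X) + SS(X)·Z + σ_s √(2 log(2/δ₂)) · e^μ, where Z ∼ N(0, σ_s²) is independent of μ (up to the coupling in the construction). Then Pr[U ≤ ε(X)] ≤ δ₂, i.e. with probability at least 1 − δ₂, U is an upper bound of ε(X). -/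
/-!
On the event `SS ≤ e^μ`, the inequality `U ≤ ε` forces `Z ≤ -σ √(2 log (2/δ))`; a centred
Gaussian of variance `σ²` is sub-Gaussian with parameter `σ²`, so the Chernoff bound gives this
event probability at most `exp (-log (2/δ)) = δ/2`. The complementary event `e^μ < SS` has
probability at most `δ/2` by hypothesis, and a union bound finishes the proof.
-/

open MeasureTheory ProbabilityTheory Real
open scoped ENNReal NNReal

section Gaussian

variable {Ω : Type*} [MeasurableSpace Ω] {P : Measure Ω} {X : Ω → ℝ} {v : ℝ≥0}

lemma hasSubgaussianMGF_of_map_eq_gaussianReal (hX_meas : AEMeasurable X P)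
    (hX : P.map X = gaussianReal 0 v) : HasSubgaussianMGF X v P := by
  rw [← HasSubgaussianMGF.id_map_iff hX_meas, hX]
  refine ⟨integrable_exp_mul_gaussianReal, fun t ↦ ?_⟩
  simp [mgf_id_gaussianReal]

lemma measure_le_neg_mul_sqrt_log_le_of_map_eq_gaussianReal [IsFiniteMeasure P] {σ δ : ℝ}
    (hσ : 0 < σ) (hv : (v : ℝ) = σ ^ 2) (hδ : 0 < δ) (hδ2 : δ ≤ 2) (hX_meas : AEMeasurable X P)
    (hX : P.map X = gaussianReal 0 v) :
    P {ω | X ω ≤ -(σ * √(2 * log (2 / δ)))} ≤ ENNReal.ofReal (δ / 2) := by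
  have hlog : 0 ≤ log (2 / δ) := log_nonneg (by rw [le_div_iff₀ hδ]; linarith)
  have hchernoff := (hasSubgaussianMGF_of_map_eq_gaussianReal hX_meas hX).neg.measure_ge_le
    (ε := σ * √(2 * log (2 / δ))) (by positivity)
  have hexponent : -(σ * √(2 * log (2 / δ))) ^ 2 / (2 * v) = -log (2 / δ) := by
    rw [mul_pow, sq_sqrt (by positivity), hv]
    field_simp
  rw [hexponent, exp_neg, exp_log (by positivity), inv_div] at hchernoff
  have hevent : {ω | σ * √(2 * log (2 / δ)) ≤ (-X) ω}
      = {ω | X ω ≤ -(σ * √(2 * log (2 / δ)))} := by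
    ext ω
    simp only [Set.mem_ofPred_eq, Pi.neg_apply, le_neg]
  rw [hevent, measureReal_def] at hchernoff
  rw [← ENNReal.ofReal_toReal (measure_ne_top P _)]
  exact ENNReal.ofReal_le_ofReal hchernoff

end Gaussian

lemma setOf_add_mul_add_mul_le_subset {Ω : Type*} {a S c : ℝ} (hS : 0 < S) (hc : 0 ≤ c)
    (Z W : Ω → ℝ) :
    {ω | a + S * Z ω + c * W ω ≤ a} ⊆ {ω | W ω < S} ∪ {ω | Z ω ≤ -c} := by
  intro ω hω
  by_contra hnot
  simp only [Set.mem_union, Set.mem_ofPred_eq, not_or, not_lt, not_le] at hω hnot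
  nlinarith [mul_le_mul_of_nonneg_left hnot.1 hc, mul_lt_mul_of_pos_left hnot.2 hS]

/-- Private upper bound validity, GNSS: let `SS > 0`, let `μ` be a
random variable with `Pr[e^μ ≥ SS] ≥ 1 - δ₂/2`, and let `Z` have law `N(0, σ_s²)`.
Then `U := ε + SS·Z + σ_s √(2 log(2/δ₂)) e^μ` satisfies `Pr[U ≤ ε] ≤ δ₂`, i.e. with
probability at least `1 - δ₂`, `U` upper-bounds `ε`. -/
theorem gnss_upper_bound_valid
    {Ω : Type*} [MeasurableSpace Ω] (P : Measure Ω) [IsProbabilityMeasure P]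
    (εX SS σs δ₂ : ℝ) (hSS : 0 < SS) (hσs : 0 < σs) (hδ₂ : 0 < δ₂) (hδ₂1 : δ₂ < 1)
    (μ Z : Ω → ℝ) (hμ_meas : Measurable μ) (hZ_meas : Measurable Z)
    (v : NNReal) (hv : (v : ℝ) = σs ^ 2)
    (hZ_law : Measure.map Z P = gaussianReal 0 v)
    (hμ_tail : P {ω | Real.exp (μ ω) ≥ SS} ≥ 1 - ENNReal.ofReal (δ₂ / 2)) :
    P {ω | εX + SS * Z ω + σs * Real.sqrt (2 * Real.log (2 / δ₂)) * Real.exp (μ ω)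
        ≤ εX} ≤ ENNReal.ofReal δ₂ := by
  set c := σs * √(2 * log (2 / δ₂))
  have hsmall_exp : P {ω | exp (μ ω) < SS} ≤ ENNReal.ofReal (δ₂ / 2) := by
    have hcompl : {ω | exp (μ ω) < SS} = {ω | exp (μ ω) ≥ SS}ᶜ := by
      ext ω
      simp [not_le]
    rw [hcompl, prob_compl_eq_one_sub (measurableSet_le measurable_const hμ_meas.exp)]
    exact tsub_le_iff_tsub_le.mp hμ_tail
  have hgauss_tail : P {ω | Z ω ≤ -c} ≤ ENNReal.ofReal (δ₂ / 2) :=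
    measure_le_neg_mul_sqrt_log_le_of_map_eq_gaussianReal hσs hv hδ₂ (by linarith)
      hZ_meas.aemeasurable hZ_law
  calc P {ω | εX + SS * Z ω + c * exp (μ ω) ≤ εX}
      ≤ P ({ω | exp (μ ω) < SS} ∪ {ω | Z ω ≤ -c}) :=
        measure_mono (setOf_add_mul_add_mul_le_subset hSS (by positivity) Z _)
    _ ≤ P {ω | exp (μ ω) < SS} + P {ω | Z ω ≤ -c} := measure_union_le _ _
    _ ≤ ENNReal.ofReal (δ₂ / 2) + ENNReal.ofReal (δ₂ / 2) := add_le_add hsmall_exp hgauss_tail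
    _ = ENNReal.ofReal δ₂ := by rw [← ENNReal.ofReal_add (by positivity) (by positivity)]; ring_nf
end
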